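/- arXiv:1205.5837 — 2 statements merged into one kernel-verified Lean document; each statement's English description precedes it below -/
import Mathlib

section
/- Let f : X → X be a map on a complete metric ball B̄(x₀, δ) in a Banach space depending on a parameter y in a ball B(y₀, r) of another Banach space, such that f(·, y) is a uniform contraction with constant k < 1 and y ↦ f(x, y) is analytic for each x, with f analytic jointly. Then the unique fixed point x*(y) depends analytically on y. -/
/-!
The contraction principle on the complete set `closedBall x₀ δ` gives, for each `y`, a unique
fixed point `fix y`, and the standard estimate
`‖fix y - fix y'‖ ≤ ‖f (fix y', y) - f (fix y', y')‖ / (1 - k)` makes `fix` continuous.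
Since `f (·, y)` is `k`-Lipschitz on the ball and its derivative is continuous, the partial
derivative `∂ₓf` has norm `≤ k < 1` even at boundary points of the ball, so `1 - ∂ₓf` is
invertible and the analytic implicit function theorem applies to `x - f (x, y) = 0`; by
continuity, `fix` agrees locally with the analytic implicit function.
-/

open Metric Set Filter Topology Function
open scoped NNReal ContDiff

section FixedPoints

variable {α : Type*} [MetricSpace α] {K : ℝ≥0} {s : Set α}

theorem LipschitzOnWith.exists_mem_isFixedPt {f : α → α} (hlip : LipschitzOnWith K f s)
    (hK : K < 1) (hs : IsComplete s) (hmaps : MapsTo f s s) (hne : s.Nonempty) :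
    ∃ x ∈ s, IsFixedPt f x := by
  obtain ⟨x₀, hx₀⟩ := hne
  obtain ⟨x, hx, hfx, -⟩ := ContractingWith.exists_fixedPoint' hs hmaps
    ⟨hK, hlip.mapsToRestrict hmaps⟩ hx₀ (edist_ne_top _ _)
  exact ⟨x, hx, hfx⟩

theorem LipschitzOnWith.dist_le_of_isFixedPt {f g : α → α} (hlip : LipschitzOnWith K f s)
    (hK : K < 1) {x y : α} (hx : x ∈ s) (hy : y ∈ s) (hfx : IsFixedPt f x)
    (hgy : IsFixedPt g y) : dist x y ≤ dist (f y) (g y) / (1 - K) := by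
  have hK' : (0 : ℝ) < 1 - K := sub_pos.2 (by exact_mod_cast hK)
  rw [le_div_iff₀ hK']
  have : dist x y ≤ K * dist x y + dist (f y) (g y) :=
    calc dist x y = dist (f x) (g y) := by rw [hfx, hgy]
      _ ≤ dist (f x) (f y) + dist (f y) (g y) := dist_triangle _ _ _
      _ ≤ K * dist x y + dist (f y) (g y) := by gcongr; exact hlip.dist_le_mul x hx y hy
  linarith

theorem LipschitzOnWith.eq_of_isFixedPt {f : α → α} (hlip : LipschitzOnWith K f s)
    (hK : K < 1) {x y : α} (hx : x ∈ s) (hy : y ∈ s) (hfx : IsFixedPt f x)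
    (hfy : IsFixedPt f y) : x = y :=
  dist_le_zero.1 <| by simpa using hlip.dist_le_of_isFixedPt hK hx hy hfx hfy

theorem continuousAt_of_isFixedPt_of_lipschitzOnWith {β : Type*} [TopologicalSpace β]
    {f : α × β → α} {t : Set β} {φ : β → α} {b : β} (hK : K < 1)
    (hlip : ∀ y ∈ t, LipschitzOnWith K (fun x => f (x, y)) s) (hφs : ∀ y ∈ t, φ y ∈ s)
    (hφ : ∀ y ∈ t, f (φ y, y) = φ y) (ht : t ∈ 𝓝 b)
    (hcont : ContinuousAt (fun y => f (φ b, y)) b) : ContinuousAt φ b := by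
  have hb : b ∈ t := mem_of_mem_nhds ht
  rw [ContinuousAt, tendsto_iff_dist_tendsto_zero]
  have hlim : Tendsto (fun y => dist (f (φ b, y)) (f (φ b, b)) / (1 - K)) (𝓝 b) (𝓝 0) := by
    simpa using (tendsto_iff_dist_tendsto_zero.1 hcont.tendsto).div_const ((1 : ℝ) - K)
  refine squeeze_zero' (Eventually.of_forall fun _ => dist_nonneg) ?_ hlim
  filter_upwards [ht] with y hy
  exact (hlip y hy).dist_le_of_isFixedPt (g := fun x => f (x, b)) hK (hφs y hy) (hφs b hb)
    (hφ y hy) (hφ b hb)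

end FixedPoints

section Calculus

variable {𝕜 : Type*} [RCLike 𝕜] {E F : Type*} [NormedAddCommGroup E] [NormedSpace 𝕜 E]
  [NormedAddCommGroup F] [NormedSpace 𝕜 F]

/-- `a` may lie on the boundary of `s`: continuity of the derivative carries the bound of
`norm_fderiv_le_of_lipschitzOn` over from the interior. -/
theorem norm_fderiv_le_of_lipschitzOn_of_mem_closure_interior {g : E → F} {s : Set E} {a : E}
    {C : ℝ≥0} (hlip : LipschitzOnWith C g s) (ha : a ∈ closure (interior s))
    (hg : ContinuousAt (fderiv 𝕜 g) a) : ‖fderiv 𝕜 g a‖ ≤ C := by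
  have := mem_closure_iff_nhdsWithin_neBot.1 ha
  have hlim : Tendsto (fun x => ‖fderiv 𝕜 g x‖) (𝓝[interior s] a) (𝓝 ‖fderiv 𝕜 g a‖) :=
    hg.norm.tendsto.mono_left nhdsWithin_le_nhds
  refine le_of_tendsto hlim ?_
  filter_upwards [self_mem_nhdsWithin] with x hx
  exact norm_fderiv_le_of_lipschitzOn 𝕜 (mem_interior_iff_mem_nhds.1 hx) hlip

theorem ContinuousLinearMap.isInvertible_one_sub [CompleteSpace E] {T : E →L[𝕜] E}
    (hT : ‖T‖ < 1) : (1 - T).IsInvertible :=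
  ⟨ContinuousLinearEquiv.unitsEquiv 𝕜 E (Units.oneSub T hT), by ext; simp⟩

/-- Near `b`, `φ` is the implicit function of `(y, x) ↦ x - f (x, y)`, whose partial derivative
in `x` is `1 - ∂ₓf`, invertible by the Neumann series. -/
theorem AnalyticAt.of_eventually_isFixedPt [CompleteSpace E] [CompleteSpace F]
    {f : E × F → E} {φ : F → E} {b : F}
    (hf : AnalyticAt 𝕜 f (φ b, b)) (hT : ‖fderiv 𝕜 (fun x => f (x, b)) (φ b)‖ < 1)
    (hφ : ContinuousAt φ b) (hfix : ∀ᶠ y in 𝓝 b, f (φ y, y) = φ y) : AnalyticAt 𝕜 φ b := by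
  set G : F × E → E := fun p => p.2 - f (p.2, p.1)
  have hG : AnalyticAt 𝕜 G (b, φ b) :=
    analyticAt_snd.sub (hf.comp_of_eq (analyticAt_snd.prod analyticAt_fst) rfl)
  have hGinv : (fderiv 𝕜 G (b, φ b) ∘L .inr 𝕜 F E).IsInvertible := by
    have hD : HasFDerivAt G
        (.snd 𝕜 F E - fderiv 𝕜 f (φ b, b) ∘L (.prod (.snd 𝕜 F E) (.fst 𝕜 F E))) (b, φ b) :=
      hasFDerivAt_snd.sub (hf.differentiableAt.hasFDerivAt.comp (b, φ b)
        (hasFDerivAt_snd.prodMk hasFDerivAt_fst))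
    have hslice : HasFDerivAt (fun x => f (x, b)) (fderiv 𝕜 f (φ b, b) ∘L .inl 𝕜 E F) (φ b) :=
      hf.differentiableAt.hasFDerivAt.comp (φ b) (hasFDerivAt_prodMk_left (φ b) b)
    convert ContinuousLinearMap.isInvertible_one_sub hT using 1
    rw [hD.fderiv, hslice.fderiv]
    ext x
    simp
  have hGω : ContDiffAt 𝕜 ω G (b, φ b) := hG.contDiffAt
  set ψ := hGω.implicitFunction (by simp) hGinv
  have hψφ : ψ =ᶠ[𝓝 b] φ := by
    have hgraph : Tendsto (fun y => (y, φ y)) (𝓝 b) (𝓝 (b, φ b)) :=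
      (continuousAt_id.prodMk hφ).tendsto
    filter_upwards [hgraph.eventually (hGω.eventually_apply_eq_iff_implicitFunction _ hGinv),
      hfix] with y hy hfy
    exact hy.1 (by simp [G, hfy, hfix.self_of_nhds])
  exact (hGω.contDiffAt_implicitFunction _ hGinv).analyticAt.congr hψφ

end Calculus

theorem uniform_contraction_fixed_point_analytic_general
    {X Y : Type*} [NormedAddCommGroup X] [NormedSpace ℂ X] [CompleteSpace X]
    [NormedAddCommGroup Y] [NormedSpace ℂ Y] [CompleteSpace Y]
    (x₀ : X) (y₀ : Y) (δ r k : ℝ) (hδ : 0 < δ)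
    (hk0 : 0 ≤ k) (hk : k < 1)
    (f : X × Y → X)
    (hmaps : ∀ x ∈ closedBall x₀ δ, ∀ y ∈ ball y₀ r, f (x, y) ∈ closedBall x₀ δ)
    (hf : AnalyticOnNhd ℂ f (closedBall x₀ δ ×ˢ ball y₀ r))
    (hcontr : ∀ x₁ ∈ closedBall x₀ δ, ∀ x₂ ∈ closedBall x₀ δ, ∀ y ∈ ball y₀ r,
      ‖f (x₁, y) - f (x₂, y)‖ ≤ k * ‖x₁ - x₂‖) :
    ∃ fix : Y → X,
      (∀ y ∈ ball y₀ r,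
        fix y ∈ closedBall x₀ δ ∧ f (fix y, y) = fix y ∧
        ∀ x ∈ closedBall x₀ δ, f (x, y) = x → x = fix y) ∧
      AnalyticOnNhd ℂ fix (ball y₀ r) := by
  lift k to ℝ≥0 using hk0
  have hk' : k < 1 := by exact_mod_cast hk
  have hlip : ∀ y ∈ ball y₀ r, LipschitzOnWith k (fun x => f (x, y)) (closedBall x₀ δ) :=
    fun y hy => LipschitzOnWith.of_dist_le_mul fun x₁ h₁ x₂ h₂ => by
      simpa only [dist_eq_norm] using hcontr x₁ h₁ x₂ h₂ y hy
  have hex : ∀ y ∈ ball y₀ r, ∃ x ∈ closedBall x₀ δ, f (x, y) = x := fun y hy =>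
    (hlip y hy).exists_mem_isFixedPt hk' isClosed_closedBall.isComplete
      (fun x hx => hmaps x hx y hy) (nonempty_closedBall.2 hδ.le)
  choose! fix hfix_mem hfix using hex
  refine ⟨fix, fun y hy => ⟨hfix_mem y hy, hfix y hy, fun x hx hfx =>
    (hlip y hy).eq_of_isFixedPt hk' hx (hfix_mem y hy) hfx (hfix y hy)⟩, fun y hy => ?_⟩
  have hfy : AnalyticAt ℂ f (fix y, y) := hf _ ⟨hfix_mem y hy, hy⟩
  have hslice : AnalyticAt ℂ (fun x => f (x, y)) (fix y) :=
    hfy.comp_of_eq (analyticAt_id.prod analyticAt_const) rfl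
  have hcont : ContinuousAt fix y :=
    continuousAt_of_isFixedPt_of_lipschitzOnWith hk' hlip hfix_mem hfix
      (isOpen_ball.mem_nhds hy) (hfy.continuousAt.comp_of_eq (by fun_prop) rfl)
  refine hfy.of_eventually_isFixedPt ?_ hcont
    (eventually_of_mem (isOpen_ball.mem_nhds hy) hfix)
  have hfix_mem' : fix y ∈ closure (interior (closedBall x₀ δ)) := by
    rw [interior_closedBall x₀ hδ.ne', closure_ball x₀ hδ.ne']
    exact hfix_mem y hy
  calc ‖fderiv ℂ (fun x => f (x, y)) (fix y)‖ ≤ k :=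
        norm_fderiv_le_of_lipschitzOn_of_mem_closure_interior (hlip y hy) hfix_mem'
          hslice.fderiv.continuousAt
    _ < 1 := hk

/-- uniform contraction principle with analytic dependence on the
parameter: if `f` maps `closedBall x₀ δ × ball y₀ r` into `closedBall x₀ δ`, is
analytic (jointly) there, and is a uniform contraction with constant `k < 1` in the
first variable, then the unique fixed point `x*(y)` depends analytically on `y`. -/
theorem uniform_contraction_fixed_point_analytic
    {X Y : Type*} [NormedAddCommGroup X] [NormedSpace ℂ X] [CompleteSpace X]
    [NormedAddCommGroup Y] [NormedSpace ℂ Y] [CompleteSpace Y]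
    (x₀ : X) (y₀ : Y) (δ r k : ℝ) (hδ : 0 < δ) (hr : 0 < r)
    (hk0 : 0 ≤ k) (hk : k < 1)
    (f : X × Y → X)
    (hmaps : ∀ x ∈ closedBall x₀ δ, ∀ y ∈ ball y₀ r, f (x, y) ∈ closedBall x₀ δ)
    (hf : AnalyticOnNhd ℂ f (closedBall x₀ δ ×ˢ ball y₀ r))
    (hcontr : ∀ x₁ ∈ closedBall x₀ δ, ∀ x₂ ∈ closedBall x₀ δ, ∀ y ∈ ball y₀ r,
      ‖f (x₁, y) - f (x₂, y)‖ ≤ k * ‖x₁ - x₂‖) :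
    ∃ fix : Y → X,
      (∀ y ∈ ball y₀ r,
        fix y ∈ closedBall x₀ δ ∧ f (fix y, y) = fix y ∧
        ∀ x ∈ closedBall x₀ δ, f (x, y) = x → x = fix y) ∧
      AnalyticOnNhd ℂ fix (ball y₀ r) :=
  uniform_contraction_fixed_point_analytic_general x₀ y₀ δ r k hδ hk0 hk f hmaps hf hcontr
end

section
/- Let E, F be complex Banach spaces and suppose x(t, y) : D_T × B_r → E solves dx/dt = f(x, y) with analytic f, and that the extended system dx/dt = f(x,y), du/dt = ∂_x f(x,y)·u + ∂_y f(x,y), with initial conditions x(0) = x₀, u(0) = 0, has a unique bounded solution (x(t,y), u(t,y)) analytic in t for each y. Then y ↦ x(t, y) is Fréchet differentiable with derivative u(t, y), i.e., the variational equation computes the derivative of the flow with respect to the parameter. -/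
/-!
Fix `t` and `y`. On the real segment `s ↦ s • t` the two equations become real ODEs on `[0, 1]`.
For a nearby parameter `w`, the defect `δ = x(·, w) - x(·, y) - u(·, y)(w - y)` satisfies
`‖δ'‖ ≤ M₁ ‖δ‖ + M₂ ‖(x(·, w) - x(·, y), w - y)‖²` by second-order Taylor expansion of `f`, as long
as the perturbed trajectory stays in a tube around the (compact) trajectory of `y` on which `∂f` and
`∂²f` are bounded. A continuity argument combined with Grönwall's inequality keeps `‖δ‖ ≤ ‖w - y‖`,
hence the trajectory inside the tube, and gives `‖δ(1)‖ = O(‖w - y‖²)`.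
-/

open Metric

variable {E F : Type*} [NormedAddCommGroup E] [NormedSpace ℂ E] [CompleteSpace E]
  [NormedAddCommGroup F] [NormedSpace ℂ F] [CompleteSpace F]

/-- Right-hand side of the variational (linearized) equation:
`∂ₓ f(x, y) ∘ u + ∂_y f(x, y)`. -/
noncomputable def varRHS (f : E × F → E) (xv : E) (y : F) (uv : F →L[ℂ] E) :
    F →L[ℂ] E :=
  ((fderiv ℂ f (xv, y)).comp (ContinuousLinearMap.inl ℂ E F)).comp uv +
    (fderiv ℂ f (xv, y)).comp (ContinuousLinearMap.inr ℂ E F)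

open Set Filter Topology

theorem IsCompact.exists_thickening_norm_le {X H : Type*} [PseudoMetricSpace X]
    [SeminormedAddCommGroup H] {K : Set X} (hK : IsCompact K) {h : X → H} (hh : Continuous h) :
    ∃ ε > 0, ∃ C, ∀ z ∈ thickening ε K, ‖h z‖ ≤ C := by
  obtain ⟨C, hC⟩ := hK.exists_bound_of_continuousOn hh.continuousOn
  obtain ⟨ε, hε, hsub⟩ := hK.exists_thickening_subset_open
    (isOpen_lt (continuous_norm.comp hh) continuous_const)
    (fun z hz => (hC z hz).trans_lt (lt_add_one C))
  exact ⟨ε, hε, C + 1, fun z hz => (hsub hz).le⟩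

theorem Convex.norm_image_sub_sub_fderiv_le {𝕜 G H : Type*} [RCLike 𝕜]
    [NormedAddCommGroup G] [NormedSpace ℝ G] [NormedSpace 𝕜 G]
    [NormedAddCommGroup H] [NormedSpace 𝕜 H] {f : G → H} {s : Set G} {C : ℝ} {x y : G}
    (hs : Convex ℝ s) (hf : ∀ z ∈ s, DifferentiableAt 𝕜 f z)
    (hf' : ∀ z ∈ s, DifferentiableAt 𝕜 (fderiv 𝕜 f) z)
    (bound : ∀ z ∈ s, ‖fderiv 𝕜 (fderiv 𝕜 f) z‖ ≤ C) (xs : x ∈ s) (ys : y ∈ s) :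
    ‖f y - f x - fderiv 𝕜 f x (y - x)‖ ≤ C * ‖y - x‖ ^ 2 := by
  have hseg : segment ℝ x y ⊆ s := hs.segment_subset xs ys
  have hC : 0 ≤ C := (norm_nonneg (fderiv 𝕜 (fderiv 𝕜 f) x)).trans (bound x xs)
  have hderiv : ∀ z ∈ segment ℝ x y, ‖fderiv 𝕜 f z - fderiv 𝕜 f x‖ ≤ C * ‖y - x‖ :=
    fun z hz => calc
      ‖fderiv 𝕜 f z - fderiv 𝕜 f x‖ ≤ C * ‖z - x‖ :=
        hs.norm_image_sub_le_of_norm_fderiv_le hf' bound xs (hseg hz)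
      _ ≤ C * ‖y - x‖ := by gcongr; exact norm_sub_le_of_mem_segment hz
  calc ‖f y - f x - fderiv 𝕜 f x (y - x)‖ ≤ C * ‖y - x‖ * ‖y - x‖ :=
        (convex_segment x y).norm_image_sub_le_of_norm_fderiv_le'
          (fun z hz => hf z (hseg hz)) hderiv (left_mem_segment ℝ x y) (right_mem_segment ℝ x y)
    _ = C * ‖y - x‖ ^ 2 := by ring

theorem gronwallBound_zero_le_mul_mul_exp {K ε x : ℝ} (hK : 0 ≤ K) (hε : 0 ≤ ε) :
    gronwallBound 0 K ε x ≤ ε * x * Real.exp (K * x) := by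
  rcases hK.eq_or_lt with rfl | hK
  · simp [gronwallBound_K0]
  · simp only [gronwallBound_of_K_ne_0 hK.ne', zero_mul, zero_add]
    -- `1 - K x ≤ exp (-K x)`, multiplied by `exp (K x)`
    have key : Real.exp (K * x) - 1 ≤ K * x * Real.exp (K * x) := by
      have h := Real.add_one_le_exp (-(K * x))
      rw [Real.exp_neg] at h
      have hpos := Real.exp_pos (K * x)
      field_simp at h
      nlinarith
    calc ε / K * (Real.exp (K * x) - 1) ≤ ε / K * (K * x * Real.exp (K * x)) := by gcongr
      _ = ε * x * Real.exp (K * x) := by field_simp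

theorem norm_le_mul_mul_exp_of_norm_deriv_le {V : Type*} [NormedAddCommGroup V] [NormedSpace ℝ V]
    {f f' : ℝ → V} {K m t : ℝ} (hK : 0 ≤ K) (hm : 0 ≤ m) (ht : 0 ≤ t)
    (hf : ContinuousOn f (Icc 0 t)) (hf' : ∀ s ∈ Ico 0 t, HasDerivWithinAt f (f' s) (Ici s) s)
    (h0 : f 0 = 0) (bound : ∀ s ∈ Ico 0 t, ‖f' s‖ ≤ K * ‖f s‖ + m) :
    ‖f t‖ ≤ m * t * Real.exp (K * t) := by
  have h := norm_le_gronwallBound_of_norm_deriv_right_le hf hf' (by rw [h0, norm_zero]) bound t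
    (right_mem_Icc.2 ht)
  rw [sub_zero] at h
  exact h.trans (gronwallBound_zero_le_mul_mul_exp hK hm)

theorem forall_le_of_bootstrap {g : ℝ → ℝ} {a b c d : ℝ} (hg : ContinuousOn g (Icc a b))
    (hdc : d < c) (h : ∀ t ∈ Icc a b, (∀ s ∈ Ico a t, g s ≤ c) → g t ≤ d) :
    ∀ t ∈ Icc a b, g t ≤ d := by
  suffices hlt : ∀ t ∈ Icc a b, g t < c from
    fun t ht => h t ht fun s hs => (hlt s ⟨hs.1, hs.2.le.trans ht.2⟩).le
  by_contra! hbad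
  have hS : IsCompact (Icc a b ∩ g ⁻¹' Ici c) := isCompact_Icc.of_isClosed_subset
    (hg.preimage_isClosed_of_isClosed isClosed_Icc isClosed_Ici) inter_subset_left
  obtain ⟨t, ⟨htI, hct⟩, hleast⟩ := hS.exists_isLeast
    (let ⟨t, ht, hct⟩ := hbad; ⟨t, ht, hct⟩)
  have hbelow : ∀ s ∈ Ico a t, g s ≤ c := fun s hs => by
    by_contra! hcs
    exact (hleast ⟨⟨hs.1, hs.2.le.trans htI.2⟩, hcs.le⟩).not_gt hs.2
  exact (h t htI hbelow).not_gt (hdc.trans_le hct)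

theorem norm_le_mul_exp_of_norm_deriv_le_of_norm_le {V : Type*} [NormedAddCommGroup V]
    [NormedSpace ℝ V] {f f' : ℝ → V} {K m n : ℝ} (hK : 0 ≤ K) (hm : 0 ≤ m)
    (hmn : m * Real.exp K < n) (hf : ∀ s ∈ Icc (0 : ℝ) 1, HasDerivAt f (f' s) s) (h0 : f 0 = 0)
    (bound : ∀ s ∈ Icc (0 : ℝ) 1, ‖f s‖ ≤ n → ‖f' s‖ ≤ K * ‖f s‖ + m) :
    ∀ t ∈ Icc (0 : ℝ) 1, ‖f t‖ ≤ m * Real.exp K := by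
  have hc : ContinuousOn f (Icc 0 1) := fun s hs => (hf s hs).continuousAt.continuousWithinAt
  refine forall_le_of_bootstrap (g := fun t => ‖f t‖) hc.norm hmn fun t ht hle => ?_
  have hsub : Icc 0 t ⊆ Icc (0 : ℝ) 1 := Icc_subset_Icc_right ht.2
  calc ‖f t‖ ≤ m * t * Real.exp (K * t) :=
        norm_le_mul_mul_exp_of_norm_deriv_le hK hm ht.1 (hc.mono hsub)
          (fun s hs => (hf s (hsub (Ico_subset_Icc_self hs))).hasDerivWithinAt) h0
          fun s hs => bound s (hsub (Ico_subset_Icc_self hs)) (hle s hs)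
    _ ≤ m * 1 * Real.exp (K * 1) := by gcongr <;> exact ht.2
    _ = m * Real.exp K := by rw [mul_one, mul_one]

theorem hasFDerivAt_of_norm_sub_sub_le_sq {𝕜 V W : Type*} [NontriviallyNormedField 𝕜]
    [NormedAddCommGroup V] [NormedSpace 𝕜 V] [NormedAddCommGroup W] [NormedSpace 𝕜 W]
    {f : V → W} {L : V →L[𝕜] W} {x : V} {c : ℝ}
    (h : ∀ᶠ y in 𝓝 x, ‖f y - f x - L (y - x)‖ ≤ c * ‖y - x‖ ^ 2) : HasFDerivAt f L x := by
  rw [hasFDerivAt_iff_isLittleO_nhds_zero]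
  refine Asymptotics.IsBigO.trans_isLittleO ?_ (Asymptotics.isLittleO_norm_pow_id one_lt_two)
  refine Asymptotics.IsBigO.of_bound c ?_
  have := (continuous_const_add x).tendsto' 0 x (add_zero x)
  filter_upwards [this.eventually h] with v hv
  simpa using hv

section Variational

variable {𝕜 V P : Type*} [RCLike 𝕜]
  [NormedAddCommGroup V] [NormedSpace ℝ V] [NormedSpace 𝕜 V]
  [NormedAddCommGroup P] [NormedSpace ℝ P] [NormedSpace 𝕜 P]
  {g : V × P → V}

theorem norm_sub_sub_fderiv_prod_le (hg : ContDiff 𝕜 2 g) {q q' : V × P} {v : V}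
    {ε M₁ M₂ : ℝ} (hM₁ : ‖fderiv 𝕜 g q‖ ≤ M₁)
    (hM₂ : ∀ z ∈ ball q ε, ‖fderiv 𝕜 (fderiv 𝕜 g) z‖ ≤ M₂) (hq' : q' ∈ ball q ε) :
    ‖g q' - g q - fderiv 𝕜 g q (v, q'.2 - q.2)‖ ≤
      M₁ * ‖q'.1 - q.1 - v‖ + M₂ * ‖q' - q‖ ^ 2 := by
  have hsplit : g q' - g q - fderiv 𝕜 g q (v, q'.2 - q.2) =
      (g q' - g q - fderiv 𝕜 g q (q' - q)) + fderiv 𝕜 g q (q'.1 - q.1 - v, 0) := by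
    have : q' - q = (v, q'.2 - q.2) + (q'.1 - q.1 - v, 0) := by ext <;> simp
    rw [this, map_add]
    abel
  have htaylor := (convex_ball q ε).norm_image_sub_sub_fderiv_le
    (fun z _ => hg.differentiable (by norm_num) z)
    (fun z _ => (hg.fderiv_right (m := 1) (by norm_num)).differentiable one_ne_zero z)
    hM₂ (mem_ball_self (pos_of_mem_ball hq')) hq'
  have hlin : ‖fderiv 𝕜 g q (q'.1 - q.1 - v, 0)‖ ≤ M₁ * ‖q'.1 - q.1 - v‖ :=
    calc ‖fderiv 𝕜 g q (q'.1 - q.1 - v, 0)‖ ≤ ‖fderiv 𝕜 g q‖ * ‖q'.1 - q.1 - v‖ := by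
          simpa using (fderiv 𝕜 g q).le_opNorm (q'.1 - q.1 - v, 0)
      _ ≤ M₁ * ‖q'.1 - q.1 - v‖ := by gcongr
  rw [hsplit]
  linarith [norm_add_le (g q' - g q - fderiv 𝕜 g q (q' - q)) (fderiv 𝕜 g q (q'.1 - q.1 - v, 0))]

theorem exists_norm_sub_sub_le_sq_of_variational (hg : ContDiff 𝕜 2 g) {X : P → ℝ → V}
    {U : ℝ → P →L[𝕜] V} {y : P}
    (hX : ∀ᶠ w in 𝓝 y, ∀ s ∈ Icc (0 : ℝ) 1, HasDerivAt (X w) (g (X w s, w)) s)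
    (hX0 : ∀ᶠ w in 𝓝 y, X w 0 = X y 0)
    (hU : ∀ v, ∀ s ∈ Icc (0 : ℝ) 1,
      HasDerivAt (fun s => U s v) (fderiv 𝕜 g (X y s, y) (U s v, v)) s)
    (hU0 : U 0 = 0) (hUc : ContinuousOn U (Icc 0 1)) :
    ∃ c, ∀ᶠ w in 𝓝 y, ‖X w 1 - X y 1 - U 1 (w - y)‖ ≤ c * ‖w - y‖ ^ 2 := by
  have hXy := hX.self_of_nhds
  set γ : ℝ → V × P := fun s => (X y s, y)
  have hγ : ∀ s ∈ Icc (0 : ℝ) 1, γ s ∈ γ '' Icc 0 1 := fun s hs => mem_image_of_mem γ hs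
  have hK : IsCompact (γ '' Icc 0 1) := isCompact_Icc.image_of_continuousOn fun s hs =>
    ((hXy s hs).continuousAt.prodMk continuousAt_const).continuousWithinAt
  obtain ⟨B, hB⟩ := isCompact_Icc.exists_bound_of_continuousOn hUc
  obtain ⟨M₁, hM₁⟩ := hK.exists_bound_of_continuousOn
    (hg.continuous_fderiv (by norm_num)).continuousOn
  obtain ⟨ε, hε, M₂, hM₂⟩ := hK.exists_thickening_norm_le
    ((hg.fderiv_right (m := 1) (by norm_num)).continuous_fderiv one_ne_zero)
  have h0 : (0 : ℝ) ∈ Icc (0 : ℝ) 1 := left_mem_Icc.2 zero_le_one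
  have hB0 : 0 ≤ B := (norm_nonneg _).trans (hB 0 h0)
  have hM₁0 : 0 ≤ M₁ := (norm_nonneg _).trans (hM₁ _ (hγ 0 h0))
  have hM₂0 : 0 ≤ M₂ := (norm_nonneg _).trans (hM₂ _ (self_subset_thickening hε _ (hγ 0 h0)))
  set A := B + 2
  set c := M₂ * A ^ 2 * Real.exp M₁
  have hdist : Continuous fun w => ‖w - y‖ := (continuous_id.sub continuous_const).norm
  have hsmall : ∀ᶠ w in 𝓝 y, A * ‖w - y‖ < ε ∧ c * ‖w - y‖ < 1 :=
    ((continuous_const.mul hdist).continuousAt.eventually_lt continuousAt_const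
      (by simpa using hε)).and
    ((continuous_const.mul hdist).continuousAt.eventually_lt continuousAt_const (by simp))
  refine ⟨c, ?_⟩
  filter_upwards [hX, hX0, hsmall] with w hXw hXw0 ⟨hεw, hcw⟩
  rcases eq_or_ne w y with rfl | hwy
  · simp
  set n := ‖w - y‖
  have hn : 0 < n := norm_pos_iff.2 (sub_ne_zero.2 hwy)
  set δ : ℝ → V := fun s => X w s - X y s - U s (w - y)
  have hδ : ∀ s ∈ Icc (0 : ℝ) 1, HasDerivAt δ
      (g (X w s, w) - g (X y s, y) - fderiv 𝕜 g (X y s, y) (U s (w - y), w - y)) s :=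
    fun s hs => ((hXw s hs).sub (hXy s hs)).sub (hU _ s hs)
  have hδ0 : δ 0 = 0 := by simp [δ, hXw0, hU0]
  -- while `‖δ‖ ≤ n`, the perturbed trajectory stays in the tube where the bounds `M₁, M₂` hold
  have hstep : ∀ s ∈ Icc (0 : ℝ) 1, ‖δ s‖ ≤ n →
      ‖g (X w s, w) - g (X y s, y) - fderiv 𝕜 g (X y s, y) (U s (w - y), w - y)‖ ≤
        M₁ * ‖δ s‖ + M₂ * A ^ 2 * n ^ 2 := by
    intro s hs hδs
    have hUn : ‖U s (w - y)‖ ≤ B * n := ((U s).le_opNorm _).trans (by gcongr; exact hB s hs)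
    have hq : ‖(X w s, w) - γ s‖ ≤ A * n := by
      have hx : X w s - X y s = δ s + U s (w - y) := by simp [δ]
      refine max_le ?_ (by simp only [Prod.snd_sub]; nlinarith)
      simp only [Prod.fst_sub, γ, hx]
      nlinarith [norm_add_le (δ s) (U s (w - y))]
    have key := norm_sub_sub_fderiv_prod_le hg (v := U s (w - y)) (hM₁ _ (hγ s hs))
      (fun z hz => hM₂ z (ball_subset_thickening (hγ s hs) ε hz))
      (mem_ball_iff_norm.2 (hq.trans_lt hεw))
    calc _ ≤ M₁ * ‖δ s‖ + M₂ * ‖(X w s, w) - γ s‖ ^ 2 := key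
      _ ≤ M₁ * ‖δ s‖ + M₂ * A ^ 2 * n ^ 2 := by
        have := pow_le_pow_left₀ (norm_nonneg _) hq 2
        nlinarith
  have hbound := norm_le_mul_exp_of_norm_deriv_le_of_norm_le hM₁0 (by positivity)
    (by simp only [c] at hcw; nlinarith) hδ hδ0 hstep 1 (right_mem_Icc.2 zero_le_one)
  simpa [δ, c, mul_right_comm] using hbound

theorem hasFDerivAt_of_variational (hg : ContDiff 𝕜 2 g) {X : P → ℝ → V}
    {U : ℝ → P →L[𝕜] V} {y : P}
    (hX : ∀ᶠ w in 𝓝 y, ∀ s ∈ Icc (0 : ℝ) 1, HasDerivAt (X w) (g (X w s, w)) s)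
    (hX0 : ∀ᶠ w in 𝓝 y, X w 0 = X y 0)
    (hU : ∀ v, ∀ s ∈ Icc (0 : ℝ) 1,
      HasDerivAt (fun s => U s v) (fderiv 𝕜 g (X y s, y) (U s v, v)) s)
    (hU0 : U 0 = 0) (hUc : ContinuousOn U (Icc 0 1)) :
    HasFDerivAt (fun w => X w 1) (U 1) y :=
  let ⟨_, hc⟩ := exists_norm_sub_sub_le_sq_of_variational hg hX hX0 hU hU0 hUc
  hasFDerivAt_of_norm_sub_sub_le_sq hc

end Variational

theorem HasDerivAt.comp_smul_ofReal {V : Type*} [NormedAddCommGroup V] [NormedSpace ℂ V]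
    {φ : ℂ → V} {v : V} {z : ℂ} {s : ℝ} (h : HasDerivAt φ v (s • z)) :
    HasDerivAt (fun r : ℝ => φ (r • z)) (z • v) s := by
  simpa only [one_smul, Function.comp_def, id] using h.scomp s ((hasDerivAt_id s).smul_const z)

theorem varRHS_apply {V W : Type*} [NormedAddCommGroup V] [NormedSpace ℂ V]
    [NormedAddCommGroup W] [NormedSpace ℂ W] (f : V × W → V) (xv : V) (y : W) (uv : W →L[ℂ] V)
    (v : W) :
    varRHS f xv y uv v = fderiv ℂ f (xv, y) (uv v, v) := by
  simp [varRHS, ← map_add]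

theorem variational_equation_gives_parameter_derivative_general
    (f : E × F → E) (hf : AnalyticOnNhd ℂ f Set.univ)
    (x₀ : E) (y₀ : F) (T r : ℝ)
    (x : ℂ × F → E) (u : ℂ × F → F →L[ℂ] E)
    (hx0 : ∀ y ∈ ball y₀ r, x (0, y) = x₀)
    (hu0 : ∀ y ∈ ball y₀ r, u (0, y) = 0)
    (hxode : ∀ y ∈ ball y₀ r, ∀ t ∈ ball (0:ℂ) T,
      HasDerivAt (fun s => x (s, y)) (f (x (t, y), y)) t)
    (huode : ∀ y ∈ ball y₀ r, ∀ t ∈ ball (0:ℂ) T,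
      HasDerivAt (fun s => u (s, y)) (varRHS f (x (t, y)) y (u (t, y))) t) :
    ∀ t ∈ ball (0:ℂ) T, ∀ y ∈ ball y₀ r,
      HasFDerivAt (fun y' => x (t, y')) (u (t, y)) y := by
  intro t ht y hy
  -- along the real segment `s ↦ s • t`, the flow solves `dX/ds = t • f (X, y)`
  have hmem : ∀ s ∈ Icc (0 : ℝ) 1, s • t ∈ ball (0 : ℂ) T := fun s hs => by
    rw [mem_ball_zero_iff, norm_smul, Real.norm_of_nonneg hs.1]
    exact (mul_le_of_le_one_left (norm_nonneg t) hs.2).trans_lt (mem_ball_zero_iff.1 ht)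
  have hfd : ∀ p, fderiv ℂ (fun p => t • f p) p = t • fderiv ℂ f p := fun p =>
    fderiv_const_smul ((hf p (mem_univ p)).differentiableAt) t
  have hderiv := hasFDerivAt_of_variational (𝕜 := ℂ) (g := fun p => t • f p)
    (X := fun w s => x (s • t, w)) (U := fun s => u (s • t, y))
    (hf.contDiff.const_smul t)
    (by
      filter_upwards [isOpen_ball.mem_nhds hy] with w hw s hs
      exact (hxode w hw _ (hmem s hs)).comp_smul_ofReal)
    (by
      filter_upwards [isOpen_ball.mem_nhds hy] with w hw
      simp [hx0 w hw, hx0 y hy])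
    (fun v s hs => by
      have h := (((ContinuousLinearMap.apply ℂ E v).hasFDerivAt).comp_hasDerivAt _
        (huode y hy _ (hmem s hs))).comp_smul_ofReal
      simpa [hfd, varRHS_apply] using h)
    (by simp [hu0 y hy])
    (fun s hs => ((huode y hy _ (hmem s hs)).continuousAt.comp (f := fun r : ℝ => r • t)
      (continuous_id.smul continuous_const).continuousAt).continuousWithinAt)
  simpa using hderiv

/-- suppose `x (t, y)` solves `dx/dt = f(x, y)`, `x(0) = x₀` on the disk
`D_T`, and the extended system consisting of this ODE together with the variational
equation `du/dt = ∂ₓ f(x,y)·u + ∂_y f(x,y)`, `u(0) = 0`, has a unique bounded solution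
`(x(t,y), u(t,y))`, analytic in `t` for each `y ∈ B_r`.  Then `y ↦ x (t, y)` is
Fréchet differentiable with derivative `u (t, y)`. -/
theorem variational_equation_gives_parameter_derivative
    (f : E × F → E) (hf : AnalyticOnNhd ℂ f Set.univ)
    (x₀ : E) (y₀ : F) (T r C : ℝ) (hT : 0 < T) (hr : 0 < r)
    (x : ℂ × F → E) (u : ℂ × F → F →L[ℂ] E)
    (hx0 : ∀ y ∈ ball y₀ r, x (0, y) = x₀)
    (hu0 : ∀ y ∈ ball y₀ r, u (0, y) = 0)
    (hxode : ∀ y ∈ ball y₀ r, ∀ t ∈ ball (0:ℂ) T,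
      HasDerivAt (fun s => x (s, y)) (f (x (t, y), y)) t)
    (huode : ∀ y ∈ ball y₀ r, ∀ t ∈ ball (0:ℂ) T,
      HasDerivAt (fun s => u (s, y)) (varRHS f (x (t, y)) y (u (t, y))) t)
    (hbdd : ∀ y ∈ ball y₀ r, ∀ t ∈ ball (0:ℂ) T, ‖x (t, y)‖ ≤ C ∧ ‖u (t, y)‖ ≤ C)
    (hanal : ∀ y ∈ ball y₀ r,
      AnalyticOnNhd ℂ (fun t => x (t, y)) (ball (0:ℂ) T) ∧
      AnalyticOnNhd ℂ (fun t => u (t, y)) (ball (0:ℂ) T))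
    (huniq : ∀ y ∈ ball y₀ r, ∀ (x' : ℂ → E) (u' : ℂ → F →L[ℂ] E),
      x' 0 = x₀ → u' 0 = 0 →
      (∀ t ∈ ball (0:ℂ) T, HasDerivAt x' (f (x' t, y)) t) →
      (∀ t ∈ ball (0:ℂ) T, HasDerivAt u' (varRHS f (x' t) y (u' t)) t) →
      (∀ t ∈ ball (0:ℂ) T, ‖x' t‖ ≤ C ∧ ‖u' t‖ ≤ C) →
      ∀ t ∈ ball (0:ℂ) T, x' t = x (t, y) ∧ u' t = u (t, y)) :
    ∀ t ∈ ball (0:ℂ) T, ∀ y ∈ ball y₀ r,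
      HasFDerivAt (fun y' => x (t, y')) (u (t, y)) y :=
  variational_equation_gives_parameter_derivative_general f hf x₀ y₀ T r x u hx0 hu0 hxode huode
end
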